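/- Gauge transformations preserve the equilibrium relations: if Δ′(T,P,μ) := Δ(T,P, μ − μ_U − T·μ_S), μ′ := μ + μ_U + T·μ_S, U′ := U + μ_U·n, S′ := S − μ_S·n, then Δ′(T,P,μ′) = Δ(T,P,μ); moreover S′ = Ω ∂Δ′/∂T(T,P,μ′) and n = Ω ∂Δ′/∂μ(T,P,μ′) whenever S = Ω ∂Δ/∂T(T,P,μ) and n = Ω ∂Δ/∂μ(T,P,μ), and the Euler equation U′ = T·S′ − P·V + μ′·n holds iff U = T·S − P·V + μ·n. -/

import Mathlib

/-!
The gauge-transformed potential is `Δ' = Δ ∘ g` for the affine map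
`g (T, P, μ) = (T, P, μ - μ_U - T • μ_S)`, which sends `(T, P, μ')` back to `(T, P, μ)` and whose
linear part fixes the `μ`-directions and sends `∂_T` to `∂_T - μ_S • ∂_μ`. By the chain rule the
`μ`-derivatives of `Δ'` at `(T, P, μ')` are those of `Δ` at `(T, P, μ)`, while the `T`-derivative
picks up `-∑ μ_S j ∂Δ/∂μ_j`, which is `-μ_S · n / Ω`. The Euler relation is pure algebra:
`μ' · n = μ · n + μ_U · n + T (μ_S · n)`.
-/

open Finset

namespace Gauge

variable {J : Type*}

def shift (μU μS : J → ℝ) (x : ℝ × ℝ × (J → ℝ)) : ℝ × ℝ × (J → ℝ) :=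
  (x.1, x.2.1, x.2.2 - μU - x.1 • μS)

def shiftCLM (μS : J → ℝ) : (ℝ × ℝ × (J → ℝ)) →L[ℝ] (ℝ × ℝ × (J → ℝ)) :=
  ContinuousLinearMap.id ℝ _ -
    (ContinuousLinearMap.inr ℝ ℝ _ ∘L ContinuousLinearMap.inr ℝ ℝ _) ∘L
      (ContinuousLinearMap.fst ℝ ℝ _).smulRight μS

@[simp]
theorem shiftCLM_apply (μS : J → ℝ) (x : ℝ × ℝ × (J → ℝ)) :
    shiftCLM μS x = (x.1, x.2.1, x.2.2 - x.1 • μS) := by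
  ext <;> simp [shiftCLM]

theorem shift_eq_shiftCLM_add (μU μS : J → ℝ) (x : ℝ × ℝ × (J → ℝ)) :
    shift μU μS x = shiftCLM μS x + (0, 0, -μU) := by
  simp only [shift, shiftCLM_apply, Prod.mk_add_mk, add_zero]
  congr 2
  abel

theorem shift_mk_add (μU μS : J → ℝ) (T P : ℝ) (μ : J → ℝ) :
    shift μU μS (T, P, μ + μU + T • μS) = (T, P, μ) := by
  simp only [shift, Prod.mk.injEq, true_and]
  abel

theorem hasFDerivAt_shift [Fintype J] (μU μS : J → ℝ) (x : ℝ × ℝ × (J → ℝ)) :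
    HasFDerivAt (shift μU μS) (shiftCLM μS) x := by
  simpa only [← shift_eq_shiftCLM_add] using (shiftCLM μS).hasFDerivAt.add_const (0, 0, -μU)

theorem fderiv_comp_shift [Fintype J] {Δ : ℝ × ℝ × (J → ℝ) → ℝ} {μU μS : J → ℝ}
    {x : ℝ × ℝ × (J → ℝ)}
    (hΔ : DifferentiableAt ℝ Δ (shift μU μS x)) :
    fderiv ℝ (fun y => Δ (shift μU μS y)) x = (fderiv ℝ Δ (shift μU μS x)).comp (shiftCLM μS) :=
  (hΔ.hasFDerivAt.comp x (hasFDerivAt_shift μU μS x)).fderiv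

end Gauge

theorem ContinuousLinearMap.apply_mk_zero_zero_eq_sum {J : Type*} [Fintype J] [DecidableEq J]
    (D : (ℝ × ℝ × (J → ℝ)) →L[ℝ] ℝ) (v : J → ℝ) :
    D (0, 0, v) = ∑ j, v j * D (0, 0, Pi.single j 1) := by
  let Dμ := D ∘L ContinuousLinearMap.inr ℝ ℝ _ ∘L ContinuousLinearMap.inr ℝ ℝ (J → ℝ)
  calc D (0, 0, v) = Dμ v := rfl
    _ = Dμ (∑ j, v j • Pi.single j 1) := by rw [← pi_eq_sum_univ']
    _ = ∑ j, v j * D (0, 0, Pi.single j 1) := by simp [Dμ, map_sum]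

open Gauge in
theorem gauge_transformation_equilibrium_general
    {J : Type*} [Fintype J] [DecidableEq J]
    (Δ : ℝ × ℝ × (J → ℝ) → ℝ) (hΔ : Differentiable ℝ Δ)
    (μU μS : J → ℝ) (Ω : ℝ)
    (Δ' : ℝ × ℝ × (J → ℝ) → ℝ)
    (hΔ' : ∀ x : ℝ × ℝ × (J → ℝ), Δ' x = Δ (x.1, x.2.1, x.2.2 - μU - x.1 • μS))
    (T P S U V : ℝ) (μ n : J → ℝ)
    (μ' : J → ℝ) (hμ' : μ' = fun j => μ j + μU j + T * μS j)
    (U' : ℝ) (hU' : U' = U + ∑ j, μU j * n j)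
    (S' : ℝ) (hS' : S' = S - ∑ j, μS j * n j) :
    Δ' (T, P, μ') = Δ (T, P, μ) ∧
    ((S = Ω * fderiv ℝ Δ (T, P, μ) (1, 0, 0) ∧
      (∀ j, n j = Ω * fderiv ℝ Δ (T, P, μ) (0, 0, Pi.single j 1))) →
     (S' = Ω * fderiv ℝ Δ' (T, P, μ') (1, 0, 0) ∧
      (∀ j, n j = Ω * fderiv ℝ Δ' (T, P, μ') (0, 0, Pi.single j 1)))) ∧
    ((U' = T * S' - P * V + ∑ j, μ' j * n j) ↔
     (U = T * S - P * V + ∑ j, μ j * n j)) := by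
  obtain rfl : Δ' = fun x => Δ (shift μU μS x) := funext hΔ'
  obtain rfl : μ' = μ + μU + T • μS := hμ'
  have hD : fderiv ℝ (fun x => Δ (shift μU μS x)) (T, P, μ + μU + T • μS) =
      (fderiv ℝ Δ (T, P, μ)).comp (shiftCLM μS) := by
    rw [fderiv_comp_shift (hΔ _), shift_mk_add]
  refine ⟨congrArg Δ (shift_mk_add μU μS T P μ), fun ⟨hS, hn⟩ => ⟨?_, fun j => ?_⟩, ?_⟩
  · have hT : shiftCLM μS (1, 0, 0) = (1, 0, 0) + (0, 0, -μS) := by ext <;> simp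
    rw [hD, ContinuousLinearMap.comp_apply, hT, map_add,
      ContinuousLinearMap.apply_mk_zero_zero_eq_sum, hS', hS]
    simp only [Pi.neg_apply, neg_mul, sum_neg_distrib, hn, mul_add, mul_neg, mul_sum,
      mul_left_comm Ω]
    ring
  · simpa [hD] using hn j
  · have hEuler : ∑ j, (μ + μU + T • μS) j * n j =
        ∑ j, μ j * n j + ∑ j, μU j * n j + T * ∑ j, μS j * n j := by
      simp only [Pi.add_apply, Pi.smul_apply, smul_eq_mul, add_mul, sum_add_distrib, mul_sum,
        mul_assoc]
    rw [hU', hS', hEuler]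
    constructor <;> intro h <;> linarith

/-- Gauge transformations preserve the equilibrium relations: with
`Δ′(T,P,μ) := Δ(T,P,μ - μ_U - T·μ_S)`, `μ′ := μ + μ_U + T·μ_S`,
`U′ := U + μ_U·n`, `S′ := S - μ_S·n`, one has `Δ′(T,P,μ′) = Δ(T,P,μ)`;
moreover `S′ = Ω ∂Δ′/∂T(T,P,μ′)` and `n = Ω ∂Δ′/∂μ(T,P,μ′)` whenever
`S = Ω ∂Δ/∂T(T,P,μ)` and `n = Ω ∂Δ/∂μ(T,P,μ)`, and the Euler equation
`U′ = T·S′ - P·V + μ′·n` holds iff `U = T·S - P·V + μ·n`. -/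
theorem gauge_transformation_equilibrium
    {J : Type*} [Fintype J] [DecidableEq J]
    (Δ : ℝ × ℝ × (J → ℝ) → ℝ) (hΔ : Differentiable ℝ Δ)
    (μU μS : J → ℝ) (Ω : ℝ) (hΩ : 0 < Ω)
    (Δ' : ℝ × ℝ × (J → ℝ) → ℝ)
    (hΔ' : ∀ x : ℝ × ℝ × (J → ℝ), Δ' x = Δ (x.1, x.2.1, x.2.2 - μU - x.1 • μS))
    (T P S U V : ℝ) (μ n : J → ℝ)
    (μ' : J → ℝ) (hμ' : μ' = fun j => μ j + μU j + T * μS j)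
    (U' : ℝ) (hU' : U' = U + ∑ j, μU j * n j)
    (S' : ℝ) (hS' : S' = S - ∑ j, μS j * n j) :
    Δ' (T, P, μ') = Δ (T, P, μ) ∧
    ((S = Ω * fderiv ℝ Δ (T, P, μ) (1, 0, 0) ∧
      (∀ j, n j = Ω * fderiv ℝ Δ (T, P, μ) (0, 0, Pi.single j 1))) →
     (S' = Ω * fderiv ℝ Δ' (T, P, μ') (1, 0, 0) ∧
      (∀ j, n j = Ω * fderiv ℝ Δ' (T, P, μ') (0, 0, Pi.single j 1)))) ∧
    ((U' = T * S' - P * V + ∑ j, μ' j * n j) ↔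
     (U = T * S - P * V + ∑ j, μ j * n j)) :=
  gauge_transformation_equilibrium_general Δ hΔ μU μS Ω Δ' hΔ' T P S U V μ n μ' hμ' U' hU' S' hS'
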